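/- (Correctness of the seminaïve algorithm.) Let Π be a Datalog program and E a dataset. Define X_0 = ∅, Δ_0 = E, and for k ≥ 0: X_{k+1} = X_k ∪ Δ_k and Δ_{k+1} = Π[X_{k+1} ∸ Δ_k] \ X_{k+1}. Then ⋃_{k≥0} X_k = mat(Π, E), the materialisation of Π with respect to E. -/
import Mathlib


namespace Datalog

/-- An atom `P(t₁,…,tₖ)`: a predicate symbol applied to a list of terms, where
`Sum.inl v` denotes the variable `v` and `Sum.inr c` denotes the constant `c`. -/
structure Atom where
  pred : ℕ
  args : List (ℕ ⊕ ℕ)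
deriving DecidableEq

/-- A fact: a variable-free atom, i.e. a predicate applied to constants only. -/
structure Fact where
  pred : ℕ
  args : List ℕ
deriving DecidableEq

/-- Applying a substitution `σ` (a map from variables to constants) to an atom. -/
def Atom.subst (A : Atom) (σ : ℕ → ℕ) : Fact :=
  ⟨A.pred, A.args.map (Sum.elim σ id)⟩

/-- The set of variables occurring in an atom. -/
def Atom.vars (A : Atom) : Set ℕ := { v | Sum.inl v ∈ A.args }

/-- A Datalog rule: a head atom and a finite set of body atoms, which is safe:
every variable of the head occurs in some body atom. -/
structure Rule where
  head : Atom
  body : Finset Atom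
  safe : ∀ v ∈ head.vars, ∃ B ∈ body, v ∈ B.vars

/-- `r[I] = { h(rσ) | b(rσ) ⊆ I }`. -/
def Rule.eval (r : Rule) (I : Set Fact) : Set Fact :=
  { f | ∃ σ : ℕ → ℕ, (∀ B ∈ r.body, B.subst σ ∈ I) ∧ f = r.head.subst σ }

/-- `r[I ∸ Δ] = { h(rσ) | b(rσ) ⊆ I and b(rσ) ∩ Δ ≠ ∅ }`. -/
def Rule.evalDelta (r : Rule) (I Δ : Set Fact) : Set Fact :=
  { f | ∃ σ : ℕ → ℕ, (∀ B ∈ r.body, B.subst σ ∈ I) ∧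
        (∃ B ∈ r.body, B.subst σ ∈ Δ) ∧ f = r.head.subst σ }

/-- `Π[I] = ⋃_{r ∈ Π} r[I]`. -/
def progEval (P : Set Rule) (I : Set Fact) : Set Fact := ⋃ r ∈ P, r.eval I

/-- `Π[I ∸ Δ] = ⋃_{r ∈ Π} r[I ∸ Δ]`. -/
def progEvalDelta (P : Set Rule) (I Δ : Set Fact) : Set Fact := ⋃ r ∈ P, r.evalDelta I Δ

/-- `I_0 = E`, `I_{i+1} = I_i ∪ Π[I_i]`. -/
def matSeq (P : Set Rule) (E : Set Fact) : ℕ → Set Fact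
  | 0 => E
  | n + 1 => matSeq P E n ∪ progEval P (matSeq P E n)

/-- The materialisation `mat(Π, E) = ⋃_{i ≥ 0} I_i`. -/
def mat (P : Set Rule) (E : Set Fact) : Set Fact := ⋃ n, matSeq P E n

/-- The state `(X_k, Δ_k)` of the seminaïve algorithm:
`X_0 = ∅`, `Δ_0 = E`, `X_{k+1} = X_k ∪ Δ_k`, `Δ_{k+1} = Π[X_{k+1} ∸ Δ_k] \ X_{k+1}`. -/
def semiSeq (P : Set Rule) (E : Set Fact) : ℕ → Set Fact × Set Fact
  | 0 => (∅, E)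
  | k + 1 =>
      let s := semiSeq P E k
      (s.1 ∪ s.2, progEvalDelta P (s.1 ∪ s.2) s.2 \ (s.1 ∪ s.2))

lemma progEval_mono (P : Set Rule) {I J : Set Fact} (h : I ⊆ J) :
    progEval P I ⊆ progEval P J := by
  intro f hf
  simp only [progEval, Set.mem_iUnion] at hf ⊢
  obtain ⟨r, hr, σ, hb, hh⟩ := hf
  exact ⟨r, hr, σ, fun B hB => h (hb B hB), hh⟩

lemma progEvalDelta_subset (P : Set Rule) (I Δ : Set Fact) :
    progEvalDelta P I Δ ⊆ progEval P I := by
  intro f hf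
  simp only [progEvalDelta, progEval, Set.mem_iUnion] at hf ⊢
  obtain ⟨r, hr, σ, hb, _, hh⟩ := hf
  exact ⟨r, hr, σ, hb, hh⟩

lemma progEval_split (P : Set Rule) (hne : ∀ r ∈ P, r.body.Nonempty) (X Δ : Set Fact) :
    progEval P (X ∪ Δ) ⊆ progEval P X ∪ progEvalDelta P (X ∪ Δ) Δ := by
  intro f hf
  simp only [progEval, progEvalDelta, Set.mem_iUnion, Set.mem_union] at hf ⊢
  obtain ⟨r, hr, σ, hb, hh⟩ := hf
  by_cases hd : ∃ B ∈ r.body, B.subst σ ∈ Δ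
  · exact Or.inr ⟨r, hr, σ, hb, hd, hh⟩
  · push_neg at hd
    refine Or.inl ⟨r, hr, σ, fun B hB => ?_, hh⟩
    rcases hb B hB with h | h
    · exact h
    · exact absurd h (hd B hB)

lemma progEval_empty (P : Set Rule) (hne : ∀ r ∈ P, r.body.Nonempty) :
    progEval P ∅ = ∅ := by
  ext f
  simp only [progEval, Set.mem_iUnion, Set.mem_empty_iff_false, iff_false]
  rintro ⟨r, hr, σ, hb, _⟩
  obtain ⟨B, hB⟩ := hne r hr
  exact hb B hB

lemma semi_invariant (P : Set Rule) (hne : ∀ r ∈ P, r.body.Nonempty) (E : Set Fact) :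
    ∀ k, (semiSeq P E (k+1)).1 = matSeq P E k ∧
      progEval P ((semiSeq P E k).1) ⊆ (semiSeq P E (k+1)).1 := by
  intro k
  induction k with
  | zero =>
    constructor
    · simp [semiSeq, matSeq]
    · simp [semiSeq, progEval_empty P hne]
  | succ k ih =>
    obtain ⟨hA, hB⟩ := ih
    set X := (semiSeq P E k).1 with hX
    set D := (semiSeq P E k).2 with hD
    have h1 : (semiSeq P E (k+1)).1 = X ∪ D := rfl
    have h2 : (semiSeq P E (k+2)).1 =
        (X ∪ D) ∪ (progEvalDelta P (X ∪ D) D \ (X ∪ D)) := rfl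
    have hB' : progEval P (X ∪ D) ⊆ (semiSeq P E (k+2)).1 := by
      intro f hf
      rcases progEval_split P hne X D hf with h | h
      · rw [h2]; left; rw [← h1]; exact hB h
      · rw [h2]
        by_cases hx : f ∈ X ∪ D
        · exact Or.inl hx
        · exact Or.inr ⟨h, hx⟩
    constructor
    · rw [h1] at hA
      have : matSeq P E (k+1) = matSeq P E k ∪ progEval P (matSeq P E k) := rfl
      rw [this, ← hA]
      apply Set.Subset.antisymm
      · rw [h2, Set.union_diff_self]
        apply Set.union_subset_union_right
        exact progEvalDelta_subset P (X ∪ D) D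
      · apply Set.union_subset
        · rw [h2]; intro f hf; exact Or.inl hf
        · exact hB'
    · intro f hf
      rw [h1] at hf
      exact hB' hf

/-- correctness of the seminaïve algorithm: `⋃_k X_k = mat(Π, E)`. -/
theorem seminaive_correct (P : Set Rule) (hP : P.Finite)
    (hne : ∀ r ∈ P, r.body.Nonempty) (E : Set Fact) :
    (⋃ k, (semiSeq P E k).1) = mat P E := by
  have hinv := semi_invariant P hne E
  apply Set.Subset.antisymm
  · apply Set.iUnion_subset
    intro k
    cases k with
    | zero => simp [semiSeq]
    | succ k =>
      rw [(hinv k).1]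
      exact Set.subset_iUnion (matSeq P E) k
  · apply Set.iUnion_subset
    intro n
    rw [← (hinv n).1]
    exact Set.subset_iUnion (fun k => (semiSeq P E k).1) (n+1)

end Datalog
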